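/- Assume additionally that m_ℓ ≥ 2 for every ℓ ∈ [d]. Let P = m_1⋯m_d, let g_d = ∑_{w∈T(m,k)} cycdes(w), and for each integer n ≥ 2 let g'(n) denote the total number of descents and cyclic descents over all cyclic (m_1,…,m_d,n)-tensor words over [k]. Then the following identity of formal power series in ℚ[[x]] holds: (∑_{n≥2} g'(n)·x^n)·(1 − k^P·x)^2 = 2·((1/2)·(k−1)·k^{2P−1}·P + k^P·g_d)·x^2 − ((1/2)·(k−1)·k^{3P−1}·P + k^{2P}·g_d)·x^3. -/

import Mathlib

/-- The number of descents of an `m`-tensor word `w` over `[k]`. -/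
def tensorDes {k d : ℕ} {m : Fin d → ℕ} (w : (∀ ℓ, Fin (m ℓ)) → Fin k) : ℕ :=
  (Finset.univ.filter fun p : (∀ ℓ, Fin (m ℓ)) × (∀ ℓ, Fin (m ℓ)) =>
      w p.2 < w p.1 ∧
        ∃ ℓ, ((p.2 ℓ : ℕ) = (p.1 ℓ : ℕ) + 1 ∧ ∀ r, r ≠ ℓ → p.2 r = p.1 r)).card

/-- The number of descents and cyclic descents of a cyclic `m`-tensor word `w` over `[k]`. -/
def tensorCycDes {k d : ℕ} {m : Fin d → ℕ} (w : (∀ ℓ, Fin (m ℓ)) → Fin k) : ℕ :=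
  tensorDes w +
    (Finset.univ.filter fun p : (∀ ℓ, Fin (m ℓ)) × (∀ ℓ, Fin (m ℓ)) =>
        w p.2 < w p.1 ∧
          ∃ ℓ, (((p.1 ℓ : ℕ) + 1 = m ℓ ∧ (p.2 ℓ : ℕ) = 0 ∧ ∀ r, r ≠ ℓ → p.2 r = p.1 r) ∧
            ∀ ℓ', ((p.1 ℓ' : ℕ) + 1 = m ℓ' ∧ (p.2 ℓ' : ℕ) = 0 ∧ ∀ r, r ≠ ℓ' → p.2 r = p.1 r) →
              ℓ' = ℓ)).card

/-- The number of descents of an `(m₁,…,m_d,n)`-tensor word `v` over `[k]`, where the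
index set is represented as `([m₁]×⋯×[m_d]) × [n]`; descents are taken in all `d + 1`
directions. -/
def extTensorDes {k d n : ℕ} {m : Fin d → ℕ}
    (v : ((∀ ℓ, Fin (m ℓ)) × Fin n) → Fin k) : ℕ :=
  (Finset.univ.filter fun p :
      ((∀ ℓ, Fin (m ℓ)) × Fin n) × ((∀ ℓ, Fin (m ℓ)) × Fin n) =>
      v p.2 < v p.1 ∧
        ((p.2.2 = p.1.2 ∧
            ∃ ℓ, ((p.2.1 ℓ : ℕ) = (p.1.1 ℓ : ℕ) + 1 ∧ ∀ r, r ≠ ℓ → p.2.1 r = p.1.1 r)) ∨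
          (p.2.1 = p.1.1 ∧ (p.2.2 : ℕ) = (p.1.2 : ℕ) + 1))).card

/-- Wrap-around in spatial direction `ℓ` for a pair of indices of an
`(m₁,…,m_d,n)`-tensor word: `i ℓ` is maximal, `j ℓ = 1`, and all other coordinates
(including the last one) agree. -/
def spatialWrap {d n : ℕ} {m : Fin d → ℕ} (ℓ : Fin d)
    (p : ((∀ r, Fin (m r)) × Fin n) × ((∀ r, Fin (m r)) × Fin n)) : Prop :=
  (p.1.1 ℓ : ℕ) + 1 = m ℓ ∧ (p.2.1 ℓ : ℕ) = 0 ∧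
    (∀ r, r ≠ ℓ → p.2.1 r = p.1.1 r) ∧ p.2.2 = p.1.2

instance {d n : ℕ} {m : Fin d → ℕ} (ℓ : Fin d)
    (p : ((∀ r, Fin (m r)) × Fin n) × ((∀ r, Fin (m r)) × Fin n)) :
    Decidable (spatialWrap ℓ p) := by unfold spatialWrap; infer_instance

/-- Wrap-around in the last (the `(d+1)`-st) direction for a pair of indices of an
`(m₁,…,m_d,n)`-tensor word. -/
def lastWrap {d n : ℕ} {m : Fin d → ℕ}
    (p : ((∀ r, Fin (m r)) × Fin n) × ((∀ r, Fin (m r)) × Fin n)) : Prop :=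
  (p.1.2 : ℕ) + 1 = n ∧ (p.2.2 : ℕ) = 0 ∧ p.2.1 = p.1.1

instance {d n : ℕ} {m : Fin d → ℕ}
    (p : ((∀ r, Fin (m r)) × Fin n) × ((∀ r, Fin (m r)) × Fin n)) :
    Decidable (lastWrap p) := by unfold lastWrap; infer_instance

/-- The number of descents and cyclic descents of a cyclic `(m₁,…,m_d,n)`-tensor word:
cyclic descents are pairs `(i, j)` with `w i > w j` wrapping around in exactly one of the
`d + 1` directions. -/
def extTensorCycDes {k d n : ℕ} {m : Fin d → ℕ}
    (v : ((∀ ℓ, Fin (m ℓ)) × Fin n) → Fin k) : ℕ :=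
  extTensorDes v +
    (Finset.univ.filter fun p :
        ((∀ ℓ, Fin (m ℓ)) × Fin n) × ((∀ ℓ, Fin (m ℓ)) × Fin n) =>
        v p.2 < v p.1 ∧
          (((∃ ℓ, spatialWrap ℓ p ∧ ∀ ℓ', spatialWrap ℓ' p → ℓ' = ℓ) ∧ ¬ lastWrap p) ∨
            (lastWrap p ∧ ∀ ℓ, ¬ spatialWrap ℓ p))).card

/-!
Summing over all words, every edge `(i, j)` of the cyclic grid graph contributes the number of
words with `w i > w j`, which is `(k - 1) k ^ (N - 1) / 2` for `N` cells, whatever the edge.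
When every side has length at least `2`, the cyclic `m`-grid has `d P` edges and the cyclic
`(m, n)`-grid has `(d + 1) P n`, so `g'(n) = B n A ^ (n - 1)` for `A = k ^ P` and a constant `B`; multiplying
`∑ n A ^ (n - 1) xⁿ` by `(1 - A x) ^ 2` leaves only the terms of degree `2` and `3`.
-/

open Finset

section WordCounting

variable {I : Type*} [Fintype I] [DecidableEq I]

theorem card_filter_apply_lt_apply (k : ℕ) {i j : I} (hij : i ≠ j) :
    (#{w : I → Fin k | w j < w i} : ℚ) = (k - 1) / 2 * k ^ (Fintype.card I - 1) := by
  let e : (I → Fin k) ≃ (Fin k × Fin k) × ({x : {x // x ≠ j} // x ≠ ⟨i, hij⟩} → Fin k) :=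
    ((Equiv.funSplitAt j _).trans ((Equiv.refl _).prodCongr (Equiv.funSplitAt _ _))).trans
      (Equiv.prodAssoc ..).symm
  have hcard : #{w : I → Fin k | w j < w i} = k.choose 2 * k ^ (Fintype.card I - 2) := by
    rw [card_equiv e (t := {q | q.1.1 < q.1.2}) (by simp [e]), ← univ_product_univ,
      filter_product_left fun a : Fin k × Fin k => a.1 < a.2, card_product,
      Fintype.card_product_filter_lt, card_univ]
    simp [Fintype.card_subtype_compl, Nat.sub_sub]
  have hI : 2 ≤ Fintype.card I := Fintype.one_lt_card_iff.2 ⟨i, j, hij⟩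
  rw [hcard, Nat.cast_mul, Nat.cast_choose_two, Nat.cast_pow,
    show Fintype.card I - 1 = Fintype.card I - 2 + 1 by omega, pow_succ]
  ring

theorem sum_card_filter_apply_lt_apply_and (k : ℕ) (Q : I × I → Prop) [DecidablePred Q]
    (hQ : ∀ p, Q p → p.1 ≠ p.2) :
    ∑ w : I → Fin k, (#{p | w p.2 < w p.1 ∧ Q p} : ℚ) =
      #{p | Q p} * ((k - 1) / 2 * k ^ (Fintype.card I - 1)) := by
  have hswap : ∑ w : I → Fin k, #{p | w p.2 < w p.1 ∧ Q p} =
      ∑ p with Q p, #{w : I → Fin k | w p.2 < w p.1} := by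
    refine (sum_card_bipartiteAbove_eq_sum_card_bipartiteBelow
      (fun (w : I → Fin k) (p : I × I) => w p.2 < w p.1 ∧ Q p)).trans ?_
    rw [sum_filter]
    refine sum_congr rfl fun p _ => ?_
    split_ifs with hp <;> simp [bipartiteBelow, hp]
  rw [← Nat.cast_sum, hswap, Nat.cast_sum,
    sum_congr rfl fun p hp => card_filter_apply_lt_apply k (hQ p (mem_filter.1 hp).2),
    sum_const, nsmul_eq_mul]

theorem card_filter_exists_eq_apply {S : Type*} [Fintype S]
    (f : S → I → I) [DecidablePred fun p : I × I => ∃ s, p.2 = f s p.1]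
    (hf : ∀ x, Function.Injective (f · x)) :
    #{p : I × I | ∃ s, p.2 = f s p.1} = Fintype.card S * Fintype.card I := by
  have himage : ({p : I × I | ∃ s, p.2 = f s p.1} : Finset _) =
      univ.image fun q : S × I => (q.2, f q.1 q.2) := by
    ext ⟨x, y⟩
    simp [eq_comm]
  rw [himage, card_image_of_injective, card_univ, Fintype.card_prod]
  rintro ⟨s, x⟩ ⟨s', x'⟩ h
  simp only [Prod.mk.injEq] at h
  obtain ⟨rfl, h⟩ := h
  rw [hf x h]

theorem sum_card_descents_along {S : Type*} [Fintype S] (k : ℕ)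
    (f : S → I → I) [DecidablePred fun p : I × I => ∃ s, p.2 = f s p.1]
    (hf : ∀ x, Function.Injective (f · x)) (hne : ∀ s x, f s x ≠ x) :
    ∑ w : I → Fin k, (#{p : I × I | w p.2 < w p.1 ∧ ∃ s, p.2 = f s p.1} : ℚ) =
      Fintype.card S * Fintype.card I * ((k - 1) / 2 * k ^ (Fintype.card I - 1)) := by
  rw [sum_card_filter_apply_lt_apply_and k _ fun p ⟨s, hs⟩ h => hne s p.1 (hs ▸ h).symm,
    card_filter_exists_eq_apply f hf, Nat.cast_mul]

end WordCounting

theorem eq_finRotate_iff {n : ℕ} {a b : Fin n} :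
    b = finRotate n a ↔ (b : ℕ) = a + 1 ∨ (a : ℕ) + 1 = n ∧ (b : ℕ) = 0 := by
  cases n with
  | zero => exact a.elim0
  | succ n =>
    rw [Fin.ext_iff, coe_finRotate]
    have := b.isLt
    split_ifs with h <;> simp only [Fin.ext_iff, Fin.val_last] at h <;> omega

theorem finRotate_ne_self {n : ℕ} (hn : 2 ≤ n) (a : Fin n) : finRotate n a ≠ a :=
  Equiv.Perm.mem_support.1 (support_finRotate_of_le hn ▸ mem_univ a)

section CyclicGrid

variable {d : ℕ} {m : Fin d → ℕ}

def cyclicSucc (ℓ : Fin d) (x : ∀ r, Fin (m r)) : ∀ r, Fin (m r) :=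
  Function.update x ℓ (finRotate (m ℓ) (x ℓ))

theorem eq_cyclicSucc_iff {ℓ : Fin d} {x y : ∀ r, Fin (m r)} :
    y = cyclicSucc ℓ x ↔
      ((y ℓ : ℕ) = x ℓ + 1 ∨ (x ℓ : ℕ) + 1 = m ℓ ∧ (y ℓ : ℕ) = 0) ∧ ∀ r, r ≠ ℓ → y r = x r := by
  rw [cyclicSucc, Function.eq_update_iff, eq_finRotate_iff]

theorem cyclicSucc_ne_self (hm : ∀ ℓ, 2 ≤ m ℓ) (ℓ : Fin d) (x : ∀ r, Fin (m r)) :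
    cyclicSucc ℓ x ≠ x := fun h =>
  finRotate_ne_self (hm ℓ) (x ℓ) (by simpa [cyclicSucc] using congrFun h ℓ)

theorem cyclicSucc_left_injective (hm : ∀ ℓ, 2 ≤ m ℓ) (x : ∀ r, Fin (m r)) :
    Function.Injective (cyclicSucc · x) := by
  intro ℓ ℓ' h
  by_contra hne
  apply finRotate_ne_self (hm ℓ) (x ℓ)
  simpa [cyclicSucc, Function.update_of_ne hne] using congrFun h ℓ

theorem tensorCycDes_eq_card (hm : ∀ ℓ, 2 ≤ m ℓ) {k : ℕ} (w : (∀ ℓ, Fin (m ℓ)) → Fin k) :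
    tensorCycDes w =
      #{p : (∀ ℓ, Fin (m ℓ)) × (∀ ℓ, Fin (m ℓ)) | w p.2 < w p.1 ∧ ∃ ℓ, p.2 = cyclicSucc ℓ p.1} := by
  rw [tensorCycDes, tensorDes, ← card_union_of_disjoint, ← filter_or]
  · refine congrArg card (filter_congr fun p _ => ?_)
    simp only [← and_or_left, eq_cyclicSucc_iff]
    refine and_congr_right fun _ => ⟨?_, ?_⟩
    · rintro (⟨ℓ, hsucc, hagree⟩ | ⟨ℓ, ⟨hlast, hzero, hagree⟩, -⟩)
      exacts [⟨ℓ, .inl hsucc, hagree⟩, ⟨ℓ, .inr ⟨hlast, hzero⟩, hagree⟩]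
    · rintro ⟨ℓ, hsucc | ⟨hlast, hzero⟩, hagree⟩
      · exact .inl ⟨ℓ, hsucc, hagree⟩
      · refine .inr ⟨ℓ, ⟨hlast, hzero, hagree⟩, fun ℓ' ⟨hlast', hzero', hagree'⟩ => ?_⟩
        have h : p.2 = cyclicSucc ℓ p.1 := eq_cyclicSucc_iff.2 ⟨.inr ⟨hlast, hzero⟩, hagree⟩
        have h' : p.2 = cyclicSucc ℓ' p.1 := eq_cyclicSucc_iff.2 ⟨.inr ⟨hlast', hzero'⟩, hagree'⟩
        exact cyclicSucc_left_injective hm p.1 (h'.symm.trans h)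
  · refine disjoint_filter.2 fun p _ ⟨_, ℓ, hsucc, hagree⟩ ⟨_, ℓ', ⟨hlast', hzero', _⟩, _⟩ => ?_
    obtain rfl | hne := eq_or_ne ℓ' ℓ
    · omega
    · have := hm ℓ'
      rw [hagree ℓ' hne] at hzero'
      omega

theorem sum_tensorCycDes (hm : ∀ ℓ, 2 ≤ m ℓ) (k : ℕ) :
    ∑ w : (∀ ℓ, Fin (m ℓ)) → Fin k, (tensorCycDes w : ℚ) =
      d * (∏ ℓ, (m ℓ : ℚ)) * ((k - 1) / 2 * k ^ (∏ ℓ, m ℓ - 1)) := by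
  simp_rw [tensorCycDes_eq_card hm]
  rw [sum_card_descents_along k _ (cyclicSucc_left_injective hm) (cyclicSucc_ne_self hm)]
  simp [Fintype.card_pi]

variable {n : ℕ}

/-- The last, `(d + 1)`-st, direction of the `(m, n)`-grid is `none`. -/
def extCyclicSucc :
    Option (Fin d) → (∀ r, Fin (m r)) × Fin n → (∀ r, Fin (m r)) × Fin n
  | none, p => (p.1, finRotate n p.2)
  | some ℓ, p => (cyclicSucc ℓ p.1, p.2)

theorem extCyclicSucc_ne_self (hm : ∀ ℓ, 2 ≤ m ℓ) (hn : 2 ≤ n) :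
    ∀ (s : Option (Fin d)) (p : (∀ r, Fin (m r)) × Fin n), extCyclicSucc s p ≠ p
  | none, _, h => finRotate_ne_self hn _ (congrArg Prod.snd h)
  | some ℓ, _, h => cyclicSucc_ne_self hm ℓ _ (congrArg Prod.fst h)

theorem extCyclicSucc_left_injective (hm : ∀ ℓ, 2 ≤ m ℓ) (hn : 2 ≤ n)
    (p : (∀ r, Fin (m r)) × Fin n) : Function.Injective (extCyclicSucc · p)
  | none, none, _ => rfl
  | none, some _, h => (finRotate_ne_self hn _ (congrArg Prod.snd h)).elim
  | some _, none, h => (finRotate_ne_self hn _ (congrArg Prod.snd h.symm)).elim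
  | some _, some _, h => congrArg some (cyclicSucc_left_injective hm p.1 (congrArg Prod.fst h))

theorem spatialWrap.eq_extCyclicSucc {ℓ : Fin d}
    {p : ((∀ r, Fin (m r)) × Fin n) × ((∀ r, Fin (m r)) × Fin n)} (h : spatialWrap ℓ p) :
    p.2 = extCyclicSucc (some ℓ) p.1 :=
  Prod.ext (eq_cyclicSucc_iff.2 ⟨.inr ⟨h.1, h.2.1⟩, h.2.2.1⟩) h.2.2.2

theorem lastWrap.eq_extCyclicSucc
    {p : ((∀ r, Fin (m r)) × Fin n) × ((∀ r, Fin (m r)) × Fin n)} (h : lastWrap p) :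
    p.2 = extCyclicSucc none p.1 :=
  Prod.ext h.2.2 (eq_finRotate_iff.2 (.inr ⟨h.1, h.2.1⟩))

theorem extTensorCycDes_eq_card (hm : ∀ ℓ, 2 ≤ m ℓ) (hn : 2 ≤ n) {k : ℕ}
    (v : ((∀ ℓ, Fin (m ℓ)) × Fin n) → Fin k) :
    extTensorCycDes v = #{p : ((∀ ℓ, Fin (m ℓ)) × Fin n) × ((∀ ℓ, Fin (m ℓ)) × Fin n) |
      v p.2 < v p.1 ∧ ∃ s, p.2 = extCyclicSucc s p.1} := by
  rw [extTensorCycDes, extTensorDes, ← card_union_of_disjoint, ← filter_or]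
  · refine congrArg card (filter_congr fun p _ => ?_)
    rw [← and_or_left]
    refine and_congr_right fun _ => ⟨?_, ?_⟩
    · rintro ((⟨ht, ℓ, hsucc, hagree⟩ | ⟨hx, ht⟩) | (⟨⟨ℓ, hw, -⟩, -⟩ | ⟨hl, -⟩))
      · exact ⟨some ℓ, Prod.ext (eq_cyclicSucc_iff.2 ⟨.inl hsucc, hagree⟩) ht⟩
      · exact ⟨none, Prod.ext hx (eq_finRotate_iff.2 (.inl ht))⟩
      exacts [⟨_, hw.eq_extCyclicSucc⟩, ⟨_, hl.eq_extCyclicSucc⟩]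
    · have hinj := extCyclicSucc_left_injective hm hn p.1
      rintro ⟨_ | ℓ, h⟩ <;> simp only [extCyclicSucc, Prod.ext_iff] at h
      · obtain ⟨hx, ht | ⟨hlast, hzero⟩⟩ := And.imp_right eq_finRotate_iff.1 h
        · exact .inl (.inr ⟨hx, ht⟩)
        · have hl : lastWrap p := ⟨hlast, hzero, hx⟩
          exact .inr (.inr ⟨hl, fun ℓ hw =>
            Option.some_ne_none ℓ (hinj (hw.eq_extCyclicSucc.symm.trans hl.eq_extCyclicSucc))⟩)
      · obtain ⟨⟨hsucc | ⟨hlast, hzero⟩, hagree⟩, ht⟩ := And.imp_left eq_cyclicSucc_iff.1 h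
        · exact .inl (.inl ⟨ht, ℓ, hsucc, hagree⟩)
        · have hw : spatialWrap ℓ p := ⟨hlast, hzero, hagree, ht⟩
          refine .inr (.inl ⟨⟨ℓ, hw, fun ℓ' hw' => ?_⟩, fun hl => ?_⟩)
          · exact Option.some_injective _
              (hinj (hw'.eq_extCyclicSucc.symm.trans hw.eq_extCyclicSucc))
          · exact Option.some_ne_none ℓ (hinj (hw.eq_extCyclicSucc.symm.trans hl.eq_extCyclicSucc))
  · refine disjoint_filter.2 fun p _ ⟨_, hQ⟩ ⟨_, hW⟩ => ?_
    rcases hQ with ⟨-, ℓ, hsucc, hagree⟩ | ⟨hx, ht⟩ <;>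
      rcases hW with ⟨⟨ℓ', ⟨hlast', hzero', -⟩, -⟩, -⟩ | ⟨⟨-, hzero, hx'⟩, -⟩
    · obtain rfl | hne := eq_or_ne ℓ' ℓ
      · omega
      · have := hm ℓ'
        rw [hagree ℓ' hne] at hzero'
        omega
    · rw [hx'] at hsucc
      omega
    · have := hm ℓ'
      rw [hx] at hzero'
      omega
    · omega

theorem sum_extTensorCycDes (hm : ∀ ℓ, 2 ≤ m ℓ) (hn : 2 ≤ n) (k : ℕ) :
    ∑ v : ((∀ ℓ, Fin (m ℓ)) × Fin n) → Fin k, (extTensorCycDes v : ℚ) =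
      (d + 1) * ((∏ ℓ, (m ℓ : ℚ)) * n) * ((k - 1) / 2 * k ^ ((∏ ℓ, m ℓ) * n - 1)) := by
  simp_rw [extTensorCycDes_eq_card hm hn]
  rw [sum_card_descents_along k _ (extCyclicSucc_left_injective hm hn)
    (extCyclicSucc_ne_self hm hn)]
  simp [Fintype.card_pi]

end CyclicGrid

open PowerSeries in
theorem mk_nat_mul_pow_mul_one_sub_C_mul_X_sq {R : Type*} [CommRing R] (A B : R) :
    (mk fun n => if n < 2 then 0 else B * n * A ^ (n - 1)) * (1 - C A * X) ^ 2 =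
      C (2 * B * A) * X ^ 2 - C (B * A ^ 2) * X ^ 3 := by
  set F : R⟦X⟧ := mk fun n => if n < 2 then 0 else B * n * A ^ (n - 1)
  have hexpand :
      F * (1 - C A * X) ^ 2 = F - C (2 * A) * (F * X ^ 1) + C (A ^ 2) * (F * X ^ 2) := by
    simp only [map_mul, map_pow, map_ofNat]
    ring
  rw [hexpand]
  ext N
  simp only [F, map_sub, map_add, coeff_C_mul, coeff_mul_X_pow', coeff_mk, coeff_C]
  rcases Nat.lt_or_ge N 4 with h | h
  · interval_cases N <;> simp <;> ring
  · obtain ⟨p, rfl⟩ : ∃ p, N = p + 4 := ⟨N - 4, by omega⟩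
    simp only [show ¬ p + 4 < 2 by omega, show ¬ p + 3 < 2 by omega, show ¬ p + 2 < 2 by omega,
      ↓reduceIte, Nat.cast_add, Nat.cast_ofNat, Nat.add_one_sub_one, le_add_iff_nonneg_left,
      zero_le, Nat.reduceSubDiff, Nat.add_eq_zero_iff, OfNat.ofNat_ne_zero, and_false,
      one_ne_zero, sub_self]
    ring

theorem gen_fun_total_cyclic_descents_general (k d : ℕ)
    (m : Fin d → ℕ) (hm : ∀ ℓ, 2 ≤ m ℓ) :
    (PowerSeries.mk fun n => if n < 2 then (0 : ℚ) else
        ∑ v : ((∀ ℓ, Fin (m ℓ)) × Fin n) → Fin k, (extTensorCycDes v : ℚ)) *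
      (1 - PowerSeries.C (R := ℚ) ((k : ℚ) ^ (∏ ℓ, m ℓ)) * PowerSeries.X) ^ 2 =
      PowerSeries.C (R := ℚ) (2 * ((1 / 2) * ((k : ℚ) - 1) * (k : ℚ) ^ (2 * (∏ ℓ, m ℓ) - 1) *
            (∏ ℓ, (m ℓ : ℚ)) +
          (k : ℚ) ^ (∏ ℓ, m ℓ) *
            ∑ w : (∀ ℓ, Fin (m ℓ)) → Fin k, (tensorCycDes w : ℚ))) *
          PowerSeries.X ^ 2 -
        PowerSeries.C (R := ℚ) ((1 / 2) * ((k : ℚ) - 1) * (k : ℚ) ^ (3 * (∏ ℓ, m ℓ) - 1) *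
            (∏ ℓ, (m ℓ : ℚ)) +
          (k : ℚ) ^ (2 * ∏ ℓ, m ℓ) *
            ∑ w : (∀ ℓ, Fin (m ℓ)) → Fin k, (tensorCycDes w : ℚ)) *
          PowerSeries.X ^ 3 := by
  have hP : 0 < ∏ ℓ, m ℓ := prod_pos fun ℓ _ => by have := hm ℓ; omega
  have hseries : (PowerSeries.mk fun n => if n < 2 then (0 : ℚ) else
        ∑ v : ((∀ ℓ, Fin (m ℓ)) × Fin n) → Fin k, (extTensorCycDes v : ℚ)) =
      PowerSeries.mk fun n => if n < 2 then 0 else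
        (d + 1) * (∏ ℓ, (m ℓ : ℚ)) * ((k - 1) / 2 * k ^ (∏ ℓ, m ℓ - 1)) * n *
          ((k : ℚ) ^ ∏ ℓ, m ℓ) ^ (n - 1) := by
    ext n
    rw [PowerSeries.coeff_mk, PowerSeries.coeff_mk]
    split_ifs with hn
    · rfl
    · have hPn : ∏ ℓ, m ℓ ≤ (∏ ℓ, m ℓ) * n := Nat.le_mul_of_pos_right _ (by omega)
      rw [sum_extTensorCycDes hm (by omega), ← pow_mul, Nat.mul_sub_one,
        show (∏ ℓ, m ℓ) * n - 1 = ∏ ℓ, m ℓ - 1 + ((∏ ℓ, m ℓ) * n - ∏ ℓ, m ℓ) by omega, pow_add]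
      ring
  rw [hseries, mk_nat_mul_pow_mul_one_sub_C_mul_X_sq, sum_tensorCycDes hm]
  generalize ∏ ℓ, m ℓ = P at hP ⊢
  rw [show 2 * P - 1 = (P - 1) + P by omega, show 3 * P - 1 = (P - 1) + 2 * P by omega, pow_add,
    pow_add, pow_mul]
  congr 3 <;> ring

/-- Let `P = ∏ m ℓ` (with every `m ℓ ≥ 2`), `g_d` the total number of descents and
cyclic descents over all cyclic `m`-tensor words over `[k]`, and `g'(n)` the total number
of descents and cyclic descents over all cyclic `(m₁,…,m_d,n)`-tensor words over `[k]`.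
Then `(∑_{n ≥ 2} g'(n) xⁿ)·(1 − k^P x)² =
2((1/2)(k−1)k^(2P−1) P + k^P g_d) x² − ((1/2)(k−1)k^(3P−1) P + k^(2P) g_d) x³`
as formal power series over `ℚ`. -/
theorem gen_fun_total_cyclic_descents (k d : ℕ) (hk : 1 ≤ k) (hd : 1 ≤ d)
    (m : Fin d → ℕ) (hm : ∀ ℓ, 2 ≤ m ℓ) :
    (PowerSeries.mk fun n => if n < 2 then (0 : ℚ) else
        ∑ v : ((∀ ℓ, Fin (m ℓ)) × Fin n) → Fin k, (extTensorCycDes v : ℚ)) *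
      (1 - PowerSeries.C (R := ℚ) ((k : ℚ) ^ (∏ ℓ, m ℓ)) * PowerSeries.X) ^ 2 =
      PowerSeries.C (R := ℚ) (2 * ((1 / 2) * ((k : ℚ) - 1) * (k : ℚ) ^ (2 * (∏ ℓ, m ℓ) - 1) *
            (∏ ℓ, (m ℓ : ℚ)) +
          (k : ℚ) ^ (∏ ℓ, m ℓ) *
            ∑ w : (∀ ℓ, Fin (m ℓ)) → Fin k, (tensorCycDes w : ℚ))) *
          PowerSeries.X ^ 2 -
        PowerSeries.C (R := ℚ) ((1 / 2) * ((k : ℚ) - 1) * (k : ℚ) ^ (3 * (∏ ℓ, m ℓ) - 1) *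
            (∏ ℓ, (m ℓ : ℚ)) +
          (k : ℚ) ^ (2 * ∏ ℓ, m ℓ) *
            ∑ w : (∀ ℓ, Fin (m ℓ)) → Fin k, (tensorCycDes w : ℚ)) *
          PowerSeries.X ^ 3 :=
  gen_fun_total_cyclic_descents_general k d m hm
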